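/- arXiv:2602.13897 — 2 statements merged into one kernel-verified Lean document; each statement's English description precedes it below -/
import Mathlib

section
/- Let p : [0,1] → ℝ≥0 be an MLC convex pricing function and let v : [0,1] → ℝ≥0 be a linear function. Let x* = ℓ(p|v(1)). Then x* ∈ Dem(p|v,∞) and r(p|v,∞) = p(x*). -/
noncomputable section

/-- The unit interval `[0,1] ⊆ ℝ`. -/
def unitI : Set ℝ := Set.Icc 0 1

/-- The lower limit of `f` at `x₀` relative to the domain `D` (in the extended reals). -/
def lowerLim (D : Set ℝ) (f : ℝ → ℝ) (x₀ : ℝ) : EReal :=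
  ⨆ δ : {δ : ℝ // 0 < δ}, ⨅ x : {x : ℝ // x ∈ D ∧ |x - x₀| ≤ δ.1}, (f x.1 : EReal)

/-- `f` is lower-continuous on `D`. -/
def LowerContOn (D : Set ℝ) (f : ℝ → ℝ) : Prop :=
  ∀ x₀ ∈ D, lowerLim D f x₀ = (f x₀ : EReal)

/-- The left derivative of `f` at `x`, as an extended real:
`f'(x) = sup_{δ ∈ (0,x]} (f x - f (x - δ)) / δ`, with `f'(0) = ⊥ = -∞`
(the index set is empty when `x ≤ 0`). -/
def leftD (f : ℝ → ℝ) (x : ℝ) : EReal :=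
  ⨆ δ : {δ : ℝ // 0 < δ ∧ δ ≤ x}, (((f x - f (x - δ.1)) / δ.1 : ℝ) : EReal)

/-- `ℓ(f|β)`: the rightmost point of `[0,1]` at which the left derivative of `f`
is at most `β` (for MLC convex `f` the supremum below is attained). -/
def ell (f : ℝ → ℝ) (β : ℝ) : ℝ :=
  sSup {x ∈ unitI | leftD f x ≤ (β : EReal)}

/-- The affordable set `F(p|b)` (budget in the extended reals, `⊤` = infinite). -/
def afford (D : Set ℝ) (p : ℝ → ℝ) (b : EReal) : Set ℝ :=
  {x ∈ D | (p x : EReal) ≤ b}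

/-- The maximum net utility `u*(p|v,b)`. -/
def uStar (D : Set ℝ) (p v : ℝ → ℝ) (b : EReal) : ℝ :=
  ⨆ x : afford D p b, (v x.1 - p x.1)

/-- The demand set `Dem(p|v,b)`. -/
def demand (D : Set ℝ) (p v : ℝ → ℝ) (b : EReal) : Set ℝ :=
  {x ∈ afford D p b | v x - p x = uStar D p v b}

/-- The revenue `r(p|v,b)`. -/
def revenue (D : Set ℝ) (p v : ℝ → ℝ) (b : EReal) : ℝ :=
  ⨆ x : demand D p v b, p x.1

/-- Let `p : [0,1] → ℝ≥0` be an MLC convex pricing function and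
`v : [0,1] → ℝ≥0` a linear function. With `x* = ℓ(p|v 1)`, we have
`x* ∈ Dem(p|v,∞)` and `r(p|v,∞) = p x*`. -/
theorem stmt6 (p : ℝ → ℝ) (hp_nonneg : ∀ x ∈ unitI, 0 ≤ p x) (hp0 : p 0 = 0)
    (hp_mono : MonotoneOn p unitI) (hp_lc : LowerContOn unitI p)
    (hp_conv : ConvexOn ℝ unitI p)
    (v : ℝ → ℝ) (hv_lin : ∀ x, v x = v 1 * x) (hv1 : 0 ≤ v 1) :
    ell p (v 1) ∈ demand unitI p v ⊤ ∧
    revenue unitI p v ⊤ = p (ell p (v 1)) := by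
  set c := v 1 with hc
  set S : Set ℝ := {x ∈ unitI | leftD p x ≤ (c : EReal)} with hS
  have hxs_def : ell p c = sSup S := by rw [hS]; rfl
  have h0u : (0:ℝ) ∈ unitI := Set.mem_Icc.mpr ⟨le_rfl, zero_le_one⟩
  have h0S : (0:ℝ) ∈ S := by
    rw [hS]
    refine ⟨h0u, ?_⟩
    rw [leftD]
    apply iSup_le
    rintro ⟨δ, h1, h2⟩
    exact absurd h2 (not_le.mpr h1)
  have hSne : S.Nonempty := ⟨0, h0S⟩
  have hSbdd : BddAbove S := ⟨1, fun x hx => by rw [hS] at hx; exact hx.1.2⟩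
  have hxs_mem : ell p c ∈ unitI := by
    rw [hxs_def]
    refine Set.mem_Icc.mpr ⟨le_csSup hSbdd h0S, csSup_le hSne ?_⟩
    intro x hx; rw [hS] at hx; exact hx.1.2
  -- Lemma A': if y ∈ S and x ≤ y then p y - p x ≤ c (y - x)
  have lemA' : ∀ y ∈ S, ∀ x ∈ unitI, x ≤ y → p y - p x ≤ c * (y - x) := by
    intro y hyS x hx hxy
    rw [hS] at hyS
    rcases eq_or_lt_of_le hxy with rfl | h
    · simp
    · have hδ : 0 < y - x := sub_pos.mpr h
      have hδy : y - x ≤ y := by linarith [hx.1]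
      have hterm : (((p y - p (y - (y - x))) / (y - x) : ℝ) : EReal) ≤ leftD p y :=
        le_iSup (fun δ : {δ : ℝ // 0 < δ ∧ δ ≤ y} =>
          (((p y - p (y - δ.1)) / δ.1 : ℝ) : EReal)) ⟨y - x, hδ, hδy⟩
      have hyx : y - (y - x) = x := by ring
      rw [hyx] at hterm
      have h2 : (((p y - p x) / (y - x) : ℝ) : EReal) ≤ (c : EReal) := hterm.trans hyS.2
      have h3 : (p y - p x) / (y - x) ≤ c := EReal.coe_le_coe_iff.mp h2
      have := mul_le_mul_of_nonneg_right h3 hδ.le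
      rwa [div_mul_cancel₀ _ (ne_of_gt hδ)] at this
  -- Lemma A
  have lemA : ∀ x ∈ unitI, x ≤ ell p c → p (ell p c) - p x ≤ c * (ell p c - x) := by
    intro x hx hxle
    rcases eq_or_lt_of_le hxle with rfl | hlt
    · simp
    · have key : ∀ ε : ℝ, 0 < ε → p (ell p c) - p x ≤ c * (ell p c - x) + ε := by
        intro ε hε
        have hlc := hp_lc (ell p c) hxs_mem
        have hlt' : ((p (ell p c) - ε : ℝ) : EReal) < lowerLim unitI p (ell p c) := by
          rw [hlc]; exact_mod_cast sub_lt_self _ hε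
        rw [lowerLim, lt_iSup_iff] at hlt'
        obtain ⟨⟨δ, hδ⟩, hinf⟩ := hlt'
        have hmax : max x (ell p c - δ) < sSup S := by
          rw [← hxs_def]
          exact max_lt hlt (by linarith)
        obtain ⟨y, hyS, hy_gt⟩ := exists_lt_of_lt_csSup hSne hmax
        have hy_le : y ≤ ell p c := by rw [hxs_def]; exact le_csSup hSbdd hyS
        have hy_gt1 : x < y := lt_of_le_of_lt (le_max_left _ _) hy_gt
        have hy_gt2 : ell p c - δ < y := lt_of_le_of_lt (le_max_right _ _) hy_gt
        have hy_unit : y ∈ unitI := by rw [hS] at hyS; exact hyS.1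
        have hy_close : |y - ell p c| ≤ δ := by
          rw [abs_sub_comm, abs_of_nonneg (by linarith)]
          linarith
        have hinf_le : ((p (ell p c) - ε : ℝ) : EReal) < (p y : EReal) :=
          hinf.trans_le (iInf_le (fun z : {z : ℝ // z ∈ unitI ∧ |z - ell p c| ≤ δ} =>
            ((p z.1 : ℝ) : EReal)) ⟨y, hy_unit, hy_close⟩)
        have hpy : p (ell p c) - ε < p y := EReal.coe_lt_coe_iff.mp hinf_le
        have hA' := lemA' y hyS x hx hy_gt1.le
        have hmul : c * (y - x) ≤ c * (ell p c - x) :=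
          mul_le_mul_of_nonneg_left (by linarith) hv1
        linarith
      by_contra hcon
      push_neg at hcon
      have := key ((p (ell p c) - p x - c * (ell p c - x)) / 2) (by linarith)
      linarith
  -- above xs, leftD > c
  have lem_above : ∀ z ∈ unitI, ell p c < z → (c : EReal) < leftD p z := by
    intro z hz hzgt
    by_contra h
    push_neg at h
    have hzS : z ∈ S := by rw [hS]; exact ⟨hz, h⟩
    have := le_csSup hSbdd hzS
    rw [← hxs_def] at this
    linarith
  -- Lemma B1
  have lemB1 : ∀ z ∈ unitI, ∀ x ∈ unitI, z < x → (c : EReal) < leftD p z →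
      c * (x - z) < p x - p z := by
    intro z hz x hx hzx hlD
    rw [leftD, lt_iSup_iff] at hlD
    obtain ⟨⟨δ, hδpos, hδz⟩, hslope⟩ := hlD
    have hslope' : c < (p z - p (z - δ)) / δ := EReal.coe_lt_coe_iff.mp hslope
    have hw_mem : z - δ ∈ unitI := Set.mem_Icc.mpr ⟨by linarith, by linarith [hz.2]⟩
    have hwz : z - δ < z := by linarith
    have hmono := hp_conv.slope_mono_adjacent hw_mem hx hwz hzx
    have hzw : z - (z - δ) = δ := by ring
    rw [hzw] at hmono
    have hlt2 : c < (p x - p z) / (x - z) := lt_of_lt_of_le hslope' hmono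
    have hxz : 0 < x - z := sub_pos.mpr hzx
    have := mul_lt_mul_of_pos_right hlt2 hxz
    rwa [div_mul_cancel₀ _ (ne_of_gt hxz)] at this
  -- Lemma B0
  have lemB0 : ∀ x ∈ unitI, ell p c < x → c * (x - ell p c) ≤ p x - p (ell p c) := by
    intro x hx hlt
    have key : ∀ z, ell p c < z → z < x → c * (x - z) ≤ p x - p (ell p c) := by
      intro z hz1 hz2
      have hz_mem : z ∈ unitI :=
        Set.mem_Icc.mpr ⟨le_trans hxs_mem.1 hz1.le, le_trans hz2.le hx.2⟩
      have h1 := lemB1 z hz_mem x hx hz2 (lem_above z hz_mem hz1)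
      have h2 : p (ell p c) ≤ p z := hp_mono hxs_mem hz_mem hz1.le
      linarith
    have key2 : ∀ ε : ℝ, 0 < ε → c * (x - ell p c) ≤ p x - p (ell p c) + ε := by
      intro ε hε
      set η := min ((x - ell p c) / 2) (ε / (c + 1)) with hη
      have hc1 : 0 < c + 1 := by linarith
      have hηpos : 0 < η := lt_min (by linarith) (div_pos hε hc1)
      have hηlt : η < x - ell p c := lt_of_le_of_lt (min_le_left _ _) (by linarith)
      have hηε : c * η ≤ ε := by
        have h1 : η ≤ ε / (c + 1) := min_le_right _ _
        have h2 : c * η ≤ c * (ε / (c + 1)) := mul_le_mul_of_nonneg_left h1 hv1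
        have h3 : c * (ε / (c + 1)) ≤ ε := by
          rw [mul_div_assoc'] ; rw [div_le_iff₀ hc1]; nlinarith
        linarith
      have := key (ell p c + η) (by linarith) (by linarith)
      nlinarith
    by_contra hcon
    push_neg at hcon
    have := key2 ((c * (x - ell p c) - (p x - p (ell p c))) / 2) (by linarith)
    linarith
  -- Lemma B2, strict
  have lemB2 : ∀ x ∈ unitI, ell p c < x → c * (x - ell p c) < p x - p (ell p c) := by
    intro x hx hlt
    set z := (ell p c + x) / 2 with hz
    have hz1 : ell p c < z := by rw [hz]; linarith
    have hz2 : z < x := by rw [hz]; linarith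
    have hz_mem : z ∈ unitI :=
      Set.mem_Icc.mpr ⟨le_trans hxs_mem.1 hz1.le, le_trans hz2.le hx.2⟩
    have h1 := lemB1 z hz_mem x hx hz2 (lem_above z hz_mem hz1)
    have h2 := lemB0 z hz_mem hz1
    nlinarith
  -- global bound for utility
  have hg : ∀ x ∈ unitI, c * x - p x ≤ c * ell p c - p (ell p c) := by
    intro x hx
    rcases le_or_gt x (ell p c) with h | h
    · have hA := lemA x hx h
      nlinarith
    · have hB := lemB0 x hx h
      nlinarith
  have hxs_aff : ell p c ∈ afford unitI p ⊤ := ⟨hxs_mem, le_top⟩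
  have hne : Nonempty (afford unitI p ⊤) := ⟨⟨_, hxs_aff⟩⟩
  have hbdd : BddAbove (Set.range (fun x : afford unitI p ⊤ => v x.1 - p x.1)) := by
    refine ⟨c * ell p c - p (ell p c), ?_⟩
    rintro r ⟨x, rfl⟩
    simp only [hv_lin]
    exact hg x.1 x.2.1
  have hustar : uStar unitI p v ⊤ = c * ell p c - p (ell p c) := by
    rw [uStar]
    apply le_antisymm
    · apply ciSup_le
      intro x
      simp only [hv_lin]
      exact hg x.1 x.2.1
    · have h := le_ciSup hbdd (⟨ell p c, hxs_aff⟩ : afford unitI p ⊤)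
      simp only [hv_lin] at h ⊢
      exact h
  have hxs_dem : ell p c ∈ demand unitI p v ⊤ := by
    refine ⟨hxs_aff, ?_⟩
    rw [hv_lin, hustar]
  have hdem_le : ∀ y ∈ demand unitI p v ⊤, p y ≤ p (ell p c) := by
    intro y hy
    rcases le_or_gt y (ell p c) with h | h
    · exact hp_mono hy.1.1 hxs_mem h
    · exfalso
      have hb := lemB2 y hy.1.1 h
      have heq : v y - p y = uStar unitI p v ⊤ := hy.2
      rw [hv_lin, hustar] at heq
      nlinarith
  have hrev : revenue unitI p v ⊤ = p (ell p c) := by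
    have hne2 : Nonempty (demand unitI p v ⊤) := ⟨⟨_, hxs_dem⟩⟩
    have hbdd2 : BddAbove (Set.range fun x : demand unitI p v ⊤ => p x.1) :=
      ⟨p (ell p c), by rintro r ⟨x, rfl⟩; exact hdem_le x.1 x.2⟩
    rw [revenue]
    apply le_antisymm
    · exact ciSup_le fun x => hdem_le x.1 x.2
    · exact le_ciSup hbdd2 ⟨_, hxs_dem⟩
  exact ⟨hxs_dem, hrev⟩

end
end

section
/- Let p : [0,1] → ℝ≥0 be a monotone, continuous, and convex pricing function, and let v : [0,1] → ℝ≥0 be a linear function. Let S ⊂ ℝ be a finite set with v(1) ∈ S, and let p̂ = disc(p,S). Then for every budget b ∈ ℝ≥0, r(p̂|v,b) ≥ r(p|v,b). -/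
noncomputable section

/-- The `i`-th smallest element of a finite set `S ⊆ ℝ` (`0`-indexed). -/
def sortedNth (S : Finset ℝ) (i : ℕ) : ℝ := (S.sort (· ≤ ·)).getD i 0

/-- The breakpoints `z_0 = 0, z_i = ℓ(f|α_i) (1 ≤ i ≤ k-1), z_k = 1` of `disc(f,S)`. -/
def discKnot (f : ℝ → ℝ) (S : Finset ℝ) (i : ℕ) : ℝ :=
  if i = 0 then 0 else if i < S.card then ell f (sortedNth S (i - 1)) else 1

/-- The discretization `disc(f,S) = f 0 + plin(z,α)` of `f` along `S = {α_1 < ⋯ < α_k}`,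
where `z_i = ℓ(f|α_i)`; on `[0,1]`, `plin(z,α)(x) = ∑_i α_i (min(x,z_i) - min(x,z_{i-1}))`
with `z_0 = 0` and `z_k = 1`. -/
def disc (f : ℝ → ℝ) (S : Finset ℝ) : ℝ → ℝ := fun x =>
  f 0 + ∑ i ∈ Finset.range S.card,
    sortedNth S i * (min x (discKnot f S (i + 1)) - min x (discKnot f S i))

/-!
Write `c = v 1` and `x* = ℓ(p|c)`. Beyond `x*` the marginal price of `p` exceeds `c`, so a buyer
facing `p` never demands more than `x*`, and `r(p|v,b) ≤ min b (p x*)`. Since `c ∈ S`, the point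
`x*` is a breakpoint of `p̂`: its slopes are at most `c` on `[0, x*]` and at least `c` on
`[x*, 1]`, so the net utility `c x - p̂ x` is unimodal with peak `x*`. The buyer therefore takes
`x*` when it is affordable, and otherwise the largest affordable point, which costs exactly `b`;
hence `r(p̂|v,b) ≥ min b (p̂ x*)`. Finally `p ≤ p̂` on `[0, x*]`, because on the `i`-th piece of
`p̂` the convex function `p` grows at rate at most `α_i`.
-/

open Finset

lemma leftD_zero (f : ℝ → ℝ) : leftD f 0 = ⊥ :=
  have : IsEmpty {δ : ℝ // 0 < δ ∧ δ ≤ 0} := ⟨fun ⟨_, h0, h⟩ => (h0.trans_le h).false⟩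
  iSup_of_empty _

lemma zero_mem_ellSet (f : ℝ → ℝ) (β : ℝ) : (0 : ℝ) ∈ {x ∈ unitI | leftD f x ≤ (β : EReal)} :=
  ⟨⟨le_rfl, zero_le_one⟩, by rw [leftD_zero]; exact bot_le⟩

lemma bddAbove_ellSet (f : ℝ → ℝ) (β : ℝ) : BddAbove {x ∈ unitI | leftD f x ≤ (β : EReal)} :=
  ⟨1, fun _ hx => hx.1.2⟩

lemma le_ell {f : ℝ → ℝ} {β x : ℝ} (hx : x ∈ unitI) (hfx : leftD f x ≤ β) : x ≤ ell f β :=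
  le_csSup (bddAbove_ellSet f β) ⟨hx, hfx⟩

lemma ell_mem_unitI (f : ℝ → ℝ) (β : ℝ) : ell f β ∈ unitI :=
  ⟨le_csSup (bddAbove_ellSet f β) (zero_mem_ellSet f β),
    csSup_le ⟨0, zero_mem_ellSet f β⟩ fun _ hx => hx.1.2⟩

lemma ell_mono (f : ℝ → ℝ) : Monotone (ell f) := fun _ β' hββ' =>
  csSup_le_csSup (bddAbove_ellSet f β') ⟨0, zero_mem_ellSet f _⟩
    fun _ hx => ⟨hx.1, hx.2.trans (EReal.coe_le_coe_iff.mpr hββ')⟩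

lemma slope_le_leftD (f : ℝ → ℝ) {a b : ℝ} (ha : 0 ≤ a) (hab : a < b) :
    (((f b - f a) / (b - a) : ℝ) : EReal) ≤ leftD f b := by
  have := le_iSup (fun δ : {δ : ℝ // 0 < δ ∧ δ ≤ b} => (((f b - f (b - δ.1)) / δ.1 : ℝ) : EReal))
    ⟨b - a, by constructor <;> linarith⟩
  simpa only [leftD, sub_sub_cancel] using this

lemma sub_le_mul_of_leftD_le {f : ℝ → ℝ} {β a x : ℝ} (hfx : leftD f x ≤ β) (ha : 0 ≤ a)
    (hax : a ≤ x) : f x - f a ≤ β * (x - a) := by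
  rcases hax.eq_or_lt with rfl | hax
  · simp
  · have hslope := EReal.coe_le_coe_iff.mp ((slope_le_leftD f ha hax).trans hfx)
    rwa [div_le_iff₀ (sub_pos.mpr hax)] at hslope

lemma exists_mul_sub_lt_of_ell_lt {f : ℝ → ℝ} {β y : ℝ} (hy : y ∈ unitI) (hβy : ell f β < y) :
    ∃ x ∈ Set.Ico 0 y, β * (y - x) < f y - f x := by
  have hlt : (β : EReal) < leftD f y := not_le.mp fun h => (le_ell hy h).not_gt hβy
  obtain ⟨⟨δ, hδ, hδy⟩, hslope⟩ := lt_iSup_iff.mp hlt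
  refine ⟨y - δ, ⟨by linarith, by linarith⟩, ?_⟩
  rw [sub_sub_cancel]
  exact (lt_div_iff₀ hδ).mp (EReal.coe_lt_coe_iff.mp hslope)

/- The points `x` with `p x - β x ≤ p a - β a` form a closed interval containing `a`, and its
right end lies beyond every point of `[a, 1]` where the left derivative is at most `β`. -/
lemma sub_le_mul_sub_of_le_ell {p : ℝ → ℝ} (hp_cont : ContinuousOn p unitI)
    (hp_conv : ConvexOn ℝ unitI p) {β a b : ℝ} (ha : a ∈ unitI) (hab : a ≤ b)
    (hb : b ≤ ell p β) : p b - p a ≤ β * (b - a) := by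
  set g : ℝ → ℝ := fun x => p x - β * x
  set T := unitI ∩ g ⁻¹' Set.Iic (g a)
  have hT_closed : IsClosed T :=
    (hp_cont.sub (continuousOn_const.mul continuousOn_id)).preimage_isClosed_of_isClosed
      isClosed_Icc isClosed_Iic
  have hT_ordConnected : T.OrdConnected :=
    ((hp_conv.sub ((LinearMap.mul ℝ ℝ β).concaveOn (convex_Icc 0 1))).convex_le (g a)).ordConnected
  have haT : a ∈ T := ⟨ha, le_refl (g a)⟩
  have hT_bdd : BddAbove T := ⟨1, fun _ hx => hx.1.2⟩
  have hell : ell p β ≤ sSup T := by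
    refine csSup_le ⟨0, zero_mem_ellSet p β⟩ fun x hx => ?_
    rcases le_total a x with hax | hxa
    · refine le_csSup hT_bdd ⟨hx.1, ?_⟩
      have := sub_le_mul_of_leftD_le hx.2 ha.1 hax
      simp only [g, Set.mem_preimage, Set.mem_Iic]
      linarith
    · exact hxa.trans (le_csSup hT_bdd haT)
  have hbT : b ∈ T :=
    hT_ordConnected.out haT (hT_closed.csSup_mem ⟨a, haT⟩ hT_bdd) ⟨hab, hb.trans hell⟩
  have hgb : g b ≤ g a := hbT.2
  simp only [g] at hgb
  linarith

lemma sortedNth_mono {S : Finset ℝ} {i j : ℕ} (hij : i ≤ j) (hj : j < S.card) :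
    sortedNth S i ≤ sortedNth S j := by
  have hlen : (S.sort (· ≤ ·)).length = S.card := S.length_sort _
  rw [sortedNth, sortedNth, List.getD_eq_getElem _ _ (by omega),
    List.getD_eq_getElem _ _ (by omega)]
  exact (S.pairwise_sort (· ≤ ·)).rel_get_of_le hij

lemma lt_of_sortedNth_lt {S : Finset ℝ} {i j : ℕ} (hi : i < S.card)
    (h : sortedNth S i < sortedNth S j) : i < j :=
  not_le.mp fun hji => (sortedNth_mono hji hi).not_gt h

lemma exists_sortedNth {S : Finset ℝ} {c : ℝ} (hc : c ∈ S) :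
    ∃ j < S.card, sortedNth S j = c := by
  obtain ⟨⟨j, hj⟩, hget⟩ := List.mem_iff_get.mp ((S.mem_sort (· ≤ ·)).mpr hc)
  rw [S.length_sort] at hj
  refine ⟨j, hj, ?_⟩
  rw [sortedNth, List.getD_eq_getElem _ _ (by rwa [S.length_sort])]
  exact hget

section discKnot

variable (p : ℝ → ℝ) (S : Finset ℝ)

@[simp] lemma discKnot_zero : discKnot p S 0 = 0 := rfl

lemma discKnot_succ {i : ℕ} (h : i + 1 < S.card) :
    discKnot p S (i + 1) = ell p (sortedNth S i) := by
  simp [discKnot, h]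

lemma discKnot_of_card_le {i : ℕ} (h0 : i ≠ 0) (h : S.card ≤ i) : discKnot p S i = 1 := by
  simp [discKnot, h0, not_lt.mpr h]

lemma discKnot_mem_unitI (i : ℕ) : discKnot p S i ∈ unitI := by
  unfold discKnot
  split_ifs
  exacts [⟨le_rfl, zero_le_one⟩, ell_mem_unitI p _, ⟨zero_le_one, le_rfl⟩]

lemma discKnot_mono : Monotone (discKnot p S) := by
  refine monotone_nat_of_le_succ fun i => ?_
  rcases Nat.lt_or_ge (i + 1) S.card with h | h
  · rcases i with _ | i
    · exact (discKnot_mem_unitI p S 1).1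
    · rw [discKnot_succ p S h, discKnot_succ p S (by omega)]
      exact ell_mono p (sortedNth_mono (by omega) (by omega))
  · rw [discKnot_of_card_le p S (by omega) h]
    exact (discKnot_mem_unitI p S i).2

end discKnot

lemma min_sub_min_sub_nonneg {a b x y : ℝ} (hab : a ≤ b) (hxy : x ≤ y) :
    0 ≤ (min y b - min y a) - (min x b - min x a) := by
  simp only [min_def]
  split_ifs <;> linarith

lemma min_sub_min_sub_eq_zero {a b x y : ℝ} (hab : a ≤ b) (hxy : x ≤ y) (h : y ≤ a ∨ b ≤ x) :
    (min y b - min y a) - (min x b - min x a) = 0 := by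
  simp only [min_def]
  rcases h with h | h <;> split_ifs <;> linarith

/- The weight of the `i`-th term is the length of `[x, y] ∩ [z i, z (i+1)]`; these lengths add up
to `y - x`. -/
lemma sum_mul_min_sub_min_le {z : ℕ → ℝ} (hz : Monotone z) (α : ℕ → ℝ) {n : ℕ} {c x y : ℝ}
    (hxy : x ≤ y) (hx : z 0 ≤ x) (hy : y ≤ z n)
    (hα : ∀ i < n, z i < y → x < z (i + 1) → α i ≤ c) :
    ∑ i ∈ range n, α i * ((min y (z (i + 1)) - min y (z i)) - (min x (z (i + 1)) - min x (z i)))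
      ≤ c * (y - x) := by
  calc ∑ i ∈ range n, α i * ((min y (z (i + 1)) - min y (z i)) - (min x (z (i + 1)) - min x (z i)))
      ≤ ∑ i ∈ range n,
          c * ((min y (z (i + 1)) - min y (z i)) - (min x (z (i + 1)) - min x (z i))) := by
        refine sum_le_sum fun i hi => ?_
        by_cases h : z i < y ∧ x < z (i + 1)
        · exact mul_le_mul_of_nonneg_right (hα i (mem_range.mp hi) h.1 h.2)
            (min_sub_min_sub_nonneg (hz i.le_succ) hxy)
        · rw [not_and_or, not_lt, not_lt] at h
          rw [min_sub_min_sub_eq_zero (hz i.le_succ) hxy h, mul_zero, mul_zero]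
    _ = c * (y - x) := by
        rw [← mul_sum, sum_sub_distrib, sum_range_sub (fun i => min y (z i)),
          sum_range_sub (fun i => min x (z i)), min_eq_left hy, min_eq_left (hxy.trans hy),
          min_eq_right hx, min_eq_right (hx.trans hxy)]
        ring

lemma continuous_disc (p : ℝ → ℝ) (S : Finset ℝ) : Continuous (disc p S) := by
  unfold disc
  fun_prop

lemma disc_zero (p : ℝ → ℝ) (S : Finset ℝ) : disc p S 0 = p 0 := by
  simp [disc, min_eq_left (discKnot_mem_unitI p S _).1]

section disc

variable {p : ℝ → ℝ} {S : Finset ℝ}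

lemma disc_sub_disc (x y : ℝ) :
    disc p S y - disc p S x = ∑ i ∈ range S.card, sortedNth S i *
      ((min y (discKnot p S (i + 1)) - min y (discKnot p S i))
        - (min x (discKnot p S (i + 1)) - min x (discKnot p S i))) := by
  simp only [disc, mul_sub, sum_sub_distrib]
  ring

lemma disc_sub_le {c x y : ℝ} (hc : c ∈ S) (hxy : x ≤ y) (hx : 0 ≤ x) (hy : y ≤ ell p c) :
    disc p S y - disc p S x ≤ c * (y - x) := by
  obtain ⟨j, hj, rfl⟩ := exists_sortedNth hc
  rw [disc_sub_disc]
  refine sum_mul_min_sub_min_le (discKnot_mono p S) _ hxy hx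
    ((hy.trans (ell_mem_unitI p _).2).trans_eq (discKnot_of_card_le p S (by omega) le_rfl).symm)
    fun i hi hzy _ => not_lt.mp fun hji => hzy.not_ge ?_
  obtain ⟨k, rfl⟩ := Nat.exists_eq_add_of_lt (lt_of_sortedNth_lt hj hji)
  rw [discKnot_succ p S hi]
  exact hy.trans (ell_mono p (sortedNth_mono (by omega) (by omega)))

lemma disc_sub_ge {c x y : ℝ} (hc : c ∈ S) (hxy : x ≤ y) (hx : ell p c ≤ x) (hy : y ≤ 1) :
    c * (y - x) ≤ disc p S y - disc p S x := by
  obtain ⟨j, hj, rfl⟩ := exists_sortedNth hc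
  have h := sum_mul_min_sub_min_le (discKnot_mono p S) (fun i => -sortedNth S i)
    (c := -sortedNth S j) hxy ((ell_mem_unitI p _).1.trans hx)
    (hy.trans_eq (discKnot_of_card_le p S (by omega) le_rfl).symm)
    fun i hi _ hxz => neg_le_neg <| not_lt.mp fun hij => hxz.not_ge ?_
  · simp only [neg_mul, sum_neg_distrib, ← disc_sub_disc] at h
    linarith
  · have hij := lt_of_sortedNth_lt hi hij
    rw [discKnot_succ p S (by omega)]
    exact (ell_mono p (sortedNth_mono hij.le hj)).trans hx

lemma le_disc {c x : ℝ} (hp_cont : ContinuousOn p unitI) (hp_conv : ConvexOn ℝ unitI p)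
    (hc : c ∈ S) (hx : x ∈ unitI) (hxc : x ≤ ell p c) : p x ≤ disc p S x := by
  obtain ⟨j, hj, rfl⟩ := exists_sortedNth hc
  have hcard : S.card ≠ 0 := by omega
  have hterm : ∀ i ∈ range S.card,
      p (min x (discKnot p S (i + 1))) - p (min x (discKnot p S i)) ≤
        sortedNth S i * (min x (discKnot p S (i + 1)) - min x (discKnot p S i)) := by
    intro i hi
    rw [mem_range] at hi
    refine sub_le_mul_sub_of_le_ell hp_cont hp_conv
      ⟨le_min hx.1 (discKnot_mem_unitI p S i).1, (min_le_left _ _).trans hx.2⟩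
      (min_le_min_left x (discKnot_mono p S i.le_succ)) ?_
    rcases Nat.lt_or_ge (i + 1) S.card with h | h
    · exact (min_le_right _ _).trans (discKnot_succ p S h).le
    · exact (min_le_left _ _).trans (hxc.trans (ell_mono p (sortedNth_mono (by omega) (by omega))))
  have hsum := sum_le_sum hterm
  rw [sum_range_sub (fun i => p (min x (discKnot p S i))), discKnot_of_card_le p S hcard le_rfl,
    discKnot_zero, min_eq_left hx.2, min_eq_right hx.1] at hsum
  unfold disc
  linarith

end disc

section market

variable {D : Set ℝ} {q v : ℝ → ℝ} {b : ℝ}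

lemma mem_afford_coe {x : ℝ} : x ∈ afford D q b ↔ x ∈ D ∧ q x ≤ b := by
  simp [afford]

lemma sub_le_sub_of_mem_demand (hbdd : BddAbove (Set.range fun x : afford D q b => v x - q x))
    {x y : ℝ} (hx : x ∈ afford D q b) (hy : y ∈ demand D q v b) : v x - q x ≤ v y - q y :=
  hy.2 ▸ le_ciSup hbdd ⟨x, hx⟩

lemma le_revenue_of_isMaxOn {t : ℝ} (ht : t ∈ afford D q b)
    (hmax : IsMaxOn (fun x => v x - q x) (afford D q b) t) : q t ≤ revenue D q v b := by
  have : Nonempty (afford D q b) := ⟨⟨t, ht⟩⟩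
  have huStar : uStar D q v b = v t - q t :=
    le_antisymm (ciSup_le fun x => hmax x.2) (le_ciSup (f := fun x : afford D q b => v x.1 - q x.1)
      ⟨v t - q t, by rintro _ ⟨x, rfl⟩; exact hmax x.2⟩ ⟨t, ht⟩)
  exact le_ciSup (f := fun x : demand D q v b => q x.1)
    ⟨b, by rintro _ ⟨x, rfl⟩; exact (mem_afford_coe.mp x.2.1).2⟩ ⟨t, ht, huStar.symm⟩

end market

section linearValuation

variable {c b : ℝ}

lemma demand_le_ell {p : ℝ → ℝ} (hp0 : p 0 = 0) (hp_mono : MonotoneOn p unitI) {y : ℝ}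
    (hy : y ∈ demand unitI p (fun x => c * x) b) : y ≤ ell p c := by
  have hbdd : BddAbove (Set.range fun x : afford unitI p b => c * x.1 - p x.1) := by
    refine ⟨|c|, ?_⟩
    rintro _ ⟨⟨x, hxI, -⟩, rfl⟩
    have hpx : 0 ≤ p x := hp0 ▸ hp_mono ⟨le_rfl, zero_le_one⟩ hxI hxI.1
    have hcx : c * x ≤ |c| := (le_abs_self _).trans <| by
      rw [abs_mul, abs_of_nonneg hxI.1]; exact mul_le_of_le_one_right (abs_nonneg c) hxI.2
    linarith
  by_contra! hlt
  obtain ⟨x, hx, hgain⟩ := exists_mul_sub_lt_of_ell_lt hy.1.1 hlt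
  have hxI : x ∈ unitI := ⟨hx.1, hx.2.le.trans hy.1.1.2⟩
  have hx_afford : x ∈ afford unitI p b :=
    mem_afford_coe.mpr ⟨hxI, (hp_mono hxI hy.1.1 hx.2.le).trans (mem_afford_coe.mp hy.1).2⟩
  have := sub_le_sub_of_mem_demand hbdd hx_afford hy
  linarith

lemma revenue_le_min_ell {p : ℝ → ℝ} (hp0 : p 0 = 0) (hp_mono : MonotoneOn p unitI)
    (hb : 0 ≤ b) : revenue unitI p (fun x => c * x) b ≤ min b (p (ell p c)) := by
  have h0I : (0 : ℝ) ∈ unitI := ⟨le_rfl, zero_le_one⟩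
  refine Real.iSup_le (fun y => le_min (mem_afford_coe.mp y.2.1).2 ?_)
    (le_min hb (hp0 ▸ hp_mono h0I (ell_mem_unitI p c) (ell_mem_unitI p c).1))
  exact hp_mono y.2.1.1 (ell_mem_unitI p c) (demand_le_ell hp0 hp_mono y.2)

variable {q : ℝ → ℝ} {xs : ℝ}

lemma isMaxOn_of_slope_le_of_le_slope
    (hleft : ∀ x y, 0 ≤ x → x ≤ y → y ≤ xs → q y - q x ≤ c * (y - x))
    (hright : ∀ x y, xs ≤ x → x ≤ y → y ≤ 1 → c * (y - x) ≤ q y - q x) :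
    IsMaxOn (fun x => c * x - q x) unitI xs := by
  intro x hx
  rcases le_total x xs with hxxs | hxsx
  · have := hleft x xs hx.1 hxxs le_rfl
    change c * x - q x ≤ c * xs - q xs
    linarith
  · have := hright xs x le_rfl hxsx hx.2
    change c * x - q x ≤ c * xs - q xs
    linarith

/- If `x*` is unaffordable, the rightmost affordable point `t` costs exactly `b` by the
intermediate value theorem on `[t, x*]`. -/
lemma min_le_revenue_of_slope_le_of_le_slope (hq : ContinuousOn q unitI) (hxs : xs ∈ unitI)
    (hq0 : q 0 ≤ b) (hc : 0 ≤ c)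
    (hleft : ∀ x y, 0 ≤ x → x ≤ y → y ≤ xs → q y - q x ≤ c * (y - x))
    (hright : ∀ x y, xs ≤ x → x ≤ y → y ≤ 1 → c * (y - x) ≤ q y - q x) :
    min b (q xs) ≤ revenue unitI q (fun x => c * x) b := by
  rcases le_or_gt (q xs) b with hxs_b | hb_xs
  · exact (min_le_right _ _).trans <| le_revenue_of_isMaxOn (mem_afford_coe.mpr ⟨hxs, hxs_b⟩)
      ((isMaxOn_of_slope_le_of_le_slope hleft hright).on_subset fun _ hx => hx.1)
  set A := unitI ∩ q ⁻¹' Set.Iic b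
  have hA_closed : IsClosed A := hq.preimage_isClosed_of_isClosed isClosed_Icc isClosed_Iic
  have hA_ne : A.Nonempty := ⟨0, ⟨le_rfl, zero_le_one⟩, hq0⟩
  have hA_bdd : BddAbove A := ⟨1, fun _ hx => hx.1.2⟩
  set t := sSup A
  have htA : t ∈ A := hA_closed.csSup_mem hA_ne hA_bdd
  have ht_xs : t ≤ xs := csSup_le hA_ne fun x hx => not_lt.mp fun hxsx => by
    have := hright xs x le_rfl hxsx.le hx.1.2
    have := mul_nonneg hc (sub_nonneg.mpr hxsx.le)
    have : q x ≤ b := hx.2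
    linarith
  obtain ⟨s, hs, hqs⟩ := intermediate_value_Icc ht_xs (hq.mono (Set.Icc_subset_Icc htA.1.1 hxs.2))
    ⟨htA.2, hb_xs.le⟩
  have hst : s = t :=
    le_antisymm (le_csSup hA_bdd ⟨⟨htA.1.1.trans hs.1, hs.2.trans hxs.2⟩, hqs.le⟩) hs.1
  have hmax : IsMaxOn (fun x => c * x - q x) (afford unitI q b) t := fun x hx => by
    have hxA : x ∈ A := mem_afford_coe.mp hx
    have := hleft x t hxA.1.1 (le_csSup hA_bdd hxA) ht_xs
    change c * x - q x ≤ c * t - q t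
    linarith
  calc min b (q xs) ≤ q t := hst ▸ hqs ▸ min_le_left _ _
    _ ≤ revenue unitI q (fun x => c * x) b := le_revenue_of_isMaxOn (mem_afford_coe.mpr htA) hmax

end linearValuation

theorem stmt8_general (p : ℝ → ℝ) (hp0 : p 0 = 0)
    (hp_mono : MonotoneOn p unitI) (hp_cont : ContinuousOn p unitI)
    (hp_conv : ConvexOn ℝ unitI p)
    (v : ℝ → ℝ) (hv_lin : ∀ x, v x = v 1 * x) (hv1 : 0 ≤ v 1)
    (S : Finset ℝ) (hvS : v 1 ∈ S) (b : ℝ) (hb : 0 ≤ b) :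
    revenue unitI (disc p S) v (b : EReal) ≥ revenue unitI p v (b : EReal) := by
  obtain ⟨c, rfl⟩ : ∃ c, v = fun x => c * x := ⟨v 1, funext hv_lin⟩
  simp only [mul_one] at hv1 hvS
  have hxs := ell_mem_unitI p c
  calc revenue unitI p (fun x => c * x) b ≤ min b (p (ell p c)) := revenue_le_min_ell hp0 hp_mono hb
    _ ≤ min b (disc p S (ell p c)) := min_le_min_left b (le_disc hp_cont hp_conv hvS hxs le_rfl)
    _ ≤ revenue unitI (disc p S) (fun x => c * x) b :=
      min_le_revenue_of_slope_le_of_le_slope (continuous_disc p S).continuousOn hxs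
        (by rw [disc_zero, hp0]; exact hb) hv1
        (fun _ _ hx hxy hy => disc_sub_le hvS hxy hx hy)
        (fun _ _ hx hxy hy => disc_sub_ge hvS hxy hx hy)

/-- Let `p : [0,1] → ℝ≥0` be a monotone, continuous, convex pricing
function and `v : [0,1] → ℝ≥0` linear. Let `S ⊆ ℝ` be a finite set with `v 1 ∈ S`, and
`p̂ = disc(p,S)`. Then for every budget `b ≥ 0`, `r(p̂|v,b) ≥ r(p|v,b)`. -/
theorem stmt8 (p : ℝ → ℝ) (hp_nonneg : ∀ x ∈ unitI, 0 ≤ p x) (hp0 : p 0 = 0)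
    (hp_mono : MonotoneOn p unitI) (hp_cont : ContinuousOn p unitI)
    (hp_conv : ConvexOn ℝ unitI p)
    (v : ℝ → ℝ) (hv_lin : ∀ x, v x = v 1 * x) (hv1 : 0 ≤ v 1)
    (S : Finset ℝ) (hvS : v 1 ∈ S) (b : ℝ) (hb : 0 ≤ b) :
    revenue unitI (disc p S) v (b : EReal) ≥ revenue unitI p v (b : EReal) :=
  stmt8_general p hp0 hp_mono hp_cont hp_conv v hv_lin hv1 S hvS b hb
end
end
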